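/- arXiv:1103.3759 — 6 statements merged into one kernel-verified Lean document; each statement's English description precedes it below -/
import Mathlib

section
/- Suppose a function h : (0,∞) → [0,1) has property (PS), X is a paracompact Hausdorff space, and E is a Banach space. Then every lower semicontinuous set-valued mapping φ : X → F(E) whose values are nonempty, closed, and h-paraconvex has a continuous selection. -/
open Set Metric Filter Topology Cardinal

universe u v

/-- A set-valued mapping is lower semicontinuous if the preimage
`φ⁻¹(U) = {x | φ x ∩ U ≠ ∅}` is open for every open `U`. -/
def LowerSemicontinuousSV {X : Type*} {E : Type*} [TopologicalSpace X] [TopologicalSpace E]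
    (φ : X → Set E) : Prop :=
  ∀ U : Set E, IsOpen U → IsOpen {x : X | (φ x ∩ U).Nonempty}

/-- A set `P` is `h`-paraconvex if for every open ball `B` of radius `r`
meeting `P` and every `q` in the closure of the convex hull of `P ∩ B`, one has
`d(q,P) ≤ h(r)·r`. -/
def FunctionallyParaconvex {E : Type*} [NormedAddCommGroup E] [NormedSpace ℝ E]
    (h : ℝ → ℝ) (P : Set E) : Prop :=
  ∀ r : ℝ, 0 < r → ∀ p : E, (Metric.ball p r ∩ P).Nonempty →
    ∀ q ∈ closure (convexHull ℝ (P ∩ Metric.ball p r)), Metric.infDist q P ≤ h r * r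

/-- The sequence `H₀(t) = 1`, `H_{n+1}(t) = H(H_n(t)·t)·H_n(t)`. -/
def PSseq (H : ℝ → ℝ) (t : ℝ) : ℕ → ℝ
  | 0 => 1
  | n + 1 => H (PSseq H t n * t) * PSseq H t n

/-- A function `h : (0,∞) → [0,1)` has property (PS) if some function
`H : (0,∞) → [0,1)` strictly dominates `h` and `∑ₙ H_n(t)` converges for all
`t > 0`. -/
def PropertyPS (h : ℝ → ℝ) : Prop :=
  ∃ H : ℝ → ℝ, (∀ t : ℝ, 0 < t → 0 ≤ H t ∧ H t < 1) ∧ (∀ t : ℝ, 0 < t → h t < H t) ∧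
    ∀ t : ℝ, 0 < t → Summable (fun n => PSseq H t n)

/-- The key improvement step in the proof of the selection theorem: given a
locally finite closed cover `C` and a continuous `g` that is, on `C T`, within
`R T - 2ε` of the values of `φ`, there is a continuous `f`, moving at most
`R T` away from `g` on `C T`, that is within `h (R T) * R T + ε` of `φ`. -/
lemma paraconvex_step_aux
    {X : Type*} [TopologicalSpace X] [ParacompactSpace X] [T2Space X]
    {E : Type*} [NormedAddCommGroup E] [NormedSpace ℝ E]
    (h : ℝ → ℝ) (φ : X → Set E)
    (hφne : ∀ x, (φ x).Nonempty)
    (hpc : ∀ x, FunctionallyParaconvex h (φ x))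
    (hφ : LowerSemicontinuousSV φ)
    (C : ℕ → Set X) (hCcl : ∀ T, IsClosed (C T)) (hCfin : LocallyFinite C)
    (hCcov : ∀ x, ∃ T, x ∈ C T)
    (g : X → E) (hg : Continuous g)
    (R : ℕ → ℝ) (hR : ∀ T, 0 < R T)
    (ε : ℝ) (hε : 0 < ε)
    (hinv : ∀ T, ∀ x ∈ C T, Metric.infDist (g x) (φ x) < R T - 2 * ε) :
    ∃ f : X → E, Continuous f ∧ (∀ T, ∀ x ∈ C T, dist (f x) (g x) < R T) ∧
      (∀ T, ∀ x ∈ C T, Metric.infDist (f x) (φ x) ≤ h (R T) * R T + ε) := by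
  classical
  set S : X → Set E := fun x =>
    {v | (φ x ∩ ball v ε).Nonempty ∧ ∀ T, x ∈ C T → dist v (g x) < R T - ε} with hS
  -- local constant selections into S
  have hlocal : ∀ x₀ : X, ∃ c : E, ∀ᶠ y in 𝓝 x₀, c ∈ convexHull ℝ (S y) := by
    intro x₀
    obtain ⟨T₀, hT₀⟩ := hCcov x₀
    have hAfin : {T | x₀ ∈ C T}.Finite := hCfin.point_finite x₀
    set A : Finset ℕ := hAfin.toFinset with hA
    have hAne : A.Nonempty := ⟨T₀, by simp [hA, Set.Finite.mem_toFinset, hT₀]⟩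
    set m : ℝ := A.inf' hAne (fun T => R T - 2 * ε) with hm
    have hmlt : Metric.infDist (g x₀) (φ x₀) < m := by
      rw [Finset.lt_inf'_iff]
      intro T hT
      exact hinv T x₀ (by simpa [hA, Set.Finite.mem_toFinset] using hT)
    obtain ⟨v, hvφ, hvd⟩ := (Metric.infDist_lt_iff (hφne x₀)).1 hmlt
    -- neighborhood where only indices in A matter
    obtain ⟨N₁, hN₁, hN₁fin⟩ := hCfin x₀
    set K : Finset ℕ := hN₁fin.toFinset.filter (fun T => x₀ ∉ C T) with hK
    set N₂ : Set X := interior N₁ ∩ (⋃ T ∈ K, C T)ᶜ with hN₂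
    have hN₂open : IsOpen N₂ := by
      apply IsOpen.inter isOpen_interior
      exact (isClosed_biUnion_finset (fun T _ => hCcl T)).isOpen_compl
    have hx₀N₂ : x₀ ∈ N₂ := by
      refine ⟨mem_interior_iff_mem_nhds.2 hN₁, ?_⟩
      intro hmem
      rw [mem_iUnion₂] at hmem
      obtain ⟨T, hTK, hTx⟩ := hmem
      exact (Finset.mem_filter.1 hTK).2 hTx
    set N₃ : Set X := {x | dist v (g x) < m} with hN₃
    have hN₃open : IsOpen N₃ := isOpen_lt (continuous_const.dist hg) continuous_const
    have hx₀N₃ : x₀ ∈ N₃ := by simpa [hN₃, dist_comm] using hvd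
    set N₄ : Set X := {x | (φ x ∩ ball v ε).Nonempty} with hN₄
    have hN₄open : IsOpen N₄ := hφ (ball v ε) isOpen_ball
    have hx₀N₄ : x₀ ∈ N₄ := ⟨v, hvφ, mem_ball_self hε⟩
    refine ⟨v, ?_⟩
    have hnb : N₂ ∩ N₃ ∩ N₄ ∈ 𝓝 x₀ :=
      ((hN₂open.inter hN₃open).inter hN₄open).mem_nhds ⟨⟨hx₀N₂, hx₀N₃⟩, hx₀N₄⟩
    filter_upwards [hnb] with y hy
    apply subset_convexHull
    refine ⟨hy.2, ?_⟩
    intro T hTy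
    have hTA : T ∈ A := by
      have h1 : (C T ∩ N₁).Nonempty := ⟨y, hTy, interior_subset hy.1.1.1⟩
      have h2 : T ∈ hN₁fin.toFinset := by simpa [Set.Finite.mem_toFinset] using h1
      by_contra hTA
      have hx₀T : x₀ ∉ C T := by
        intro hcon
        exact hTA (by simp [hA, Set.Finite.mem_toFinset, hcon])
      have hTK : T ∈ K := Finset.mem_filter.2 ⟨h2, hx₀T⟩
      have := hy.1.1.2
      exact this (mem_iUnion₂.2 ⟨T, hTK, hTy⟩)
    have hmle : m ≤ R T - 2 * ε := Finset.inf'_le _ hTA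
    have : dist v (g y) < m := hy.1.2
    linarith
  obtain ⟨f, hf⟩ := exists_continuous_forall_mem_convex_of_local_const
    (t := fun x => convexHull ℝ (S x)) (fun x => convex_convexHull ℝ (S x)) hlocal
  refine ⟨f, f.continuous, ?_, ?_⟩
  · -- movement bound
    intro T x hx
    have hsub : S x ⊆ ball (g x) (R T - ε) := fun v hv => mem_ball.2 (hv.2 T hx)
    have hmem : f x ∈ ball (g x) (R T - ε) :=
      convexHull_min hsub (convex_ball _ _) (hf x)
    have := mem_ball.1 hmem
    linarith
  · -- distance to φ x
    intro T x hx
    have hfx := hf x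
    rw [convexHull_eq] at hfx
    obtain ⟨ι, t, w, z, hw₀, hw₁, hz, hcm⟩ := hfx
    have htne : t.Nonempty := by
      rcases Finset.eq_empty_or_nonempty t with rfl | hne
      · simp at hw₁
      · exact hne
    have hchoice : ∀ i : ι, ∃ u : E, i ∈ t → u ∈ φ x ∩ ball (z i) ε := by
      intro i
      by_cases hi : i ∈ t
      · obtain ⟨u, hu⟩ := (hz i hi).1
        exact ⟨u, fun _ => hu⟩
      · exact ⟨0, fun hcon => absurd hcon hi⟩
    choose u hu using hchoice
    have huφ : ∀ i ∈ t, u i ∈ φ x := fun i hi => (hu i hi).1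
    have hud : ∀ i ∈ t, dist (u i) (z i) < ε := fun i hi => mem_ball.1 (hu i hi).2
    have huball : ∀ i ∈ t, u i ∈ φ x ∩ ball (g x) (R T) := by
      intro i hi
      refine ⟨huφ i hi, mem_ball.2 ?_⟩
      have h1 : dist (z i) (g x) < R T - ε := (hz i hi).2 T hx
      calc dist (u i) (g x) ≤ dist (u i) (z i) + dist (z i) (g x) := dist_triangle _ _ _
        _ < ε + (R T - ε) := add_lt_add (hud i hi) h1
        _ = R T := by ring
    set q : E := t.centerMass w u with hq
    have hqmem : q ∈ convexHull ℝ (φ x ∩ ball (g x) (R T)) :=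
      Finset.centerMass_mem_convexHull t hw₀ (by rw [hw₁]; norm_num) huball
    obtain ⟨i₀, hi₀⟩ := htne
    have hballne : (ball (g x) (R T) ∩ φ x).Nonempty :=
      ⟨u i₀, (huball i₀ hi₀).2, (huball i₀ hi₀).1⟩
    have hqdist : Metric.infDist q (φ x) ≤ h (R T) * R T :=
      hpc x (R T) (hR T) (g x) hballne q (subset_closure hqmem)
    have hfq : dist (f x) q ≤ ε := by
      rw [← hcm, hq]
      rw [Finset.centerMass_eq_of_sum_1 _ _ hw₁, Finset.centerMass_eq_of_sum_1 _ _ hw₁]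
      rw [dist_eq_norm, ← Finset.sum_sub_distrib]
      calc ‖∑ i ∈ t, (w i • z i - w i • u i)‖ ≤ ∑ i ∈ t, ‖w i • z i - w i • u i‖ :=
            norm_sum_le _ _
        _ ≤ ∑ i ∈ t, w i * ε := by
            apply Finset.sum_le_sum
            intro i hi
            rw [← smul_sub, norm_smul, Real.norm_of_nonneg (hw₀ i hi)]
            apply mul_le_mul_of_nonneg_left _ (hw₀ i hi)
            rw [← dist_eq_norm]
            exact le_of_lt (by rw [dist_comm]; exact hud i hi)
        _ = ε := by rw [← Finset.sum_mul, hw₁, one_mul]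
    calc Metric.infDist (f x) (φ x) ≤ Metric.infDist q (φ x) + dist (f x) q :=
          Metric.infDist_le_infDist_add_dist
      _ ≤ h (R T) * R T + ε := add_le_add hqdist hfq

/-- Radius sequences for the successive approximations: the sequence grows by
`1` until stage `T`, then follows the `H`-orbit `a ↦ H a * a`. -/
def aSeq (H : ℝ → ℝ) (T : ℕ) : ℕ → ℝ
  | 0 => T + 1
  | n + 1 => if n < T then aSeq H T n + 1 else H (aSeq H T n) * aSeq H T n

lemma aSeq_pos (H : ℝ → ℝ) (hHpos : ∀ t : ℝ, 0 < t → 0 < H t) (T : ℕ) :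
    ∀ n, 0 < aSeq H T n := by
  intro n
  induction n with
  | zero => simp only [aSeq]; positivity
  | succ k ih =>
    rw [aSeq]
    split
    · linarith
    · exact mul_pos (hHpos _ ih) ih

lemma aSeq_phase2 (H : ℝ → ℝ) (T : ℕ) :
    ∀ j, aSeq H T (T + j) = PSseq H (aSeq H T T) j * aSeq H T T := by
  intro j
  induction j with
  | zero => simp [PSseq]
  | succ k ih =>
    have heq : T + (k + 1) = (T + k) + 1 := rfl
    rw [heq, aSeq, if_neg (by omega), ih, PSseq]
    ring

lemma aSeq_summable (H : ℝ → ℝ) (hHpos : ∀ t : ℝ, 0 < t → 0 < H t)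
    (hsum : ∀ t : ℝ, 0 < t → Summable (fun n => PSseq H t n)) (T : ℕ) :
    Summable (fun n => aSeq H T n) := by
  have h0 : 0 < aSeq H T T := aSeq_pos H hHpos T T
  have key : (fun n => aSeq H T (n + T)) = fun n => PSseq H (aSeq H T T) n * aSeq H T T := by
    funext n
    rw [add_comm, aSeq_phase2]
  refine (summable_nat_add_iff T).1 ?_
  rw [key]
  exact (hsum _ h0).mul_right _

/-- Semenov's functionally paraconvex-valued selection theorem on
paracompact spaces. -/
theorem functionallyParaconvex_selection_paracompact
    (h : ℝ → ℝ) (hrange : ∀ t : ℝ, 0 < t → 0 ≤ h t ∧ h t < 1)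
    (hPS : PropertyPS h)
    (X : Type*) [TopologicalSpace X] [ParacompactSpace X] [T2Space X]
    (E : Type*) [NormedAddCommGroup E] [NormedSpace ℝ E] [CompleteSpace E]
    (φ : X → Set E)
    (hφval : ∀ x, (φ x).Nonempty ∧ IsClosed (φ x) ∧ FunctionallyParaconvex h (φ x))
    (hφ : LowerSemicontinuousSV φ) :
    ∃ f : X → E, Continuous f ∧ ∀ x, f x ∈ φ x := by
  classical
  obtain ⟨H, hHrange, hdom, hsum⟩ := hPS
  have hφne : ∀ x, (φ x).Nonempty := fun x => (hφval x).1
  have hφcl : ∀ x, IsClosed (φ x) := fun x => (hφval x).2.1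
  have hpc : ∀ x, FunctionallyParaconvex h (φ x) := fun x => (hφval x).2.2
  have hHpos : ∀ t : ℝ, 0 < t → 0 < H t := fun t ht =>
    lt_of_le_of_lt (hrange t ht).1 (hdom t ht)
  -- the locally finite closed cover
  set U : ℕ → Set X := fun T => {x | (φ x ∩ ball (0 : E) T).Nonempty} with hU
  have hUopen : ∀ T, IsOpen (U T) := fun T => hφ _ isOpen_ball
  have hUcov : (univ : Set X) ⊆ ⋃ T, U T := by
    intro x _
    obtain ⟨v, hv⟩ := hφne x
    refine mem_iUnion.2 ⟨⌊‖v‖⌋₊ + 1, ⟨v, hv, ?_⟩⟩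
    rw [mem_ball, dist_zero_right]
    push_cast
    exact Nat.lt_floor_add_one _
  obtain ⟨p, hp⟩ := PartitionOfUnity.exists_isSubordinate isClosed_univ U hUopen hUcov
  set C : ℕ → Set X := fun T => tsupport (p T) with hC
  have hCcl : ∀ T, IsClosed (C T) := fun T => isClosed_tsupport _
  have hCfin : LocallyFinite C := p.locallyFinite.closure
  have hCcov : ∀ x, ∃ T, x ∈ C T := fun x =>
    (p.exists_pos (mem_univ x)).imp fun T hT => subset_closure (Function.mem_support.2 hT.ne')
  have hCU : ∀ T, C T ⊆ U T := hp
  -- radius sequences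
  set a : ℕ → ℕ → ℝ := fun T n => aSeq H T n with ha
  have hapos : ∀ T n, 0 < a T n := fun T n => aSeq_pos H hHpos T n
  have hasum : ∀ T, Summable (fun n => a T n) := fun T => aSeq_summable H hHpos hsum T
  set σ : ℕ → ℕ → ℝ := fun T n => (H (a T n) - h (a T n)) * a T n with hσ
  have hσpos : ∀ T n, 0 < σ T n := fun T n =>
    mul_pos (sub_pos.2 (hdom _ (hapos T n))) (hapos T n)
  set ε : ℕ → ℝ := fun n => min ((1 / 8) * (1 / 2) ^ n)
      ((1 / 4) * ((Finset.range (n + 1)).inf' Finset.nonempty_range_add_one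
        (fun T => min (σ T n) (σ T (n - 1))))) with hε
  have hεpos : ∀ n, 0 < ε n := by
    intro n
    apply lt_min
    · positivity
    · apply mul_pos (by norm_num)
      rw [Finset.lt_inf'_iff]
      exact fun T _ => lt_min (hσpos _ _) (hσpos _ _)
  have hεle : ∀ n, ε n ≤ 1 / 8 := by
    intro n
    refine le_trans (min_le_left _ _) ?_
    have h1 : ((1 : ℝ) / 2) ^ n ≤ 1 := pow_le_one₀ (by norm_num) (by norm_num)
    nlinarith
  have hεσ : ∀ T n, T ≤ n → ε n ≤ σ T n / 4 ∧ ε n ≤ σ T (n - 1) / 4 := by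
    intro T n hTn
    have hmem : T ∈ Finset.range (n + 1) := Finset.mem_range.2 (by omega)
    have h1 : ε n ≤ (1 / 4) * min (σ T n) (σ T (n - 1)) :=
      le_trans (min_le_right _ _)
        (mul_le_mul_of_nonneg_left (Finset.inf'_le _ hmem) (by norm_num))
    constructor
    · calc ε n ≤ (1 / 4) * min (σ T n) (σ T (n - 1)) := h1
        _ ≤ (1 / 4) * σ T n := mul_le_mul_of_nonneg_left (min_le_left _ _) (by norm_num)
        _ = σ T n / 4 := by ring
    · calc ε n ≤ (1 / 4) * min (σ T n) (σ T (n - 1)) := h1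
        _ ≤ (1 / 4) * σ T (n - 1) := mul_le_mul_of_nonneg_left (min_le_right _ _) (by norm_num)
        _ = σ T (n - 1) / 4 := by ring
  -- the invariant
  set Inv : ℕ → (X → E) → Prop := fun n g =>
    ∀ T, ∀ x ∈ C T, Metric.infDist (g x) (φ x) < a T n - 2 * ε n with hInv
  have hbase : Inv 0 (fun _ => 0) := by
    intro T x hx
    obtain ⟨v, hvφ, hvb⟩ := hCU T hx
    have h1 : Metric.infDist (0 : E) (φ x) ≤ dist (0 : E) v :=
      Metric.infDist_le_dist_of_mem hvφ
    have h2 : dist (0 : E) v < T := by rw [dist_comm]; exact mem_ball.1 hvb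
    have h3 : a T 0 = T + 1 := rfl
    have h4 := hεle 0
    rw [h3]
    linarith
  -- the improvement step
  have hstep : ∀ n (g : X → E), Continuous g → Inv n g →
      ∃ f : X → E, Continuous f ∧ Inv (n + 1) f ∧
        ∀ T, ∀ x ∈ C T, dist (f x) (g x) < a T n := by
    intro n g hgc hginv
    obtain ⟨f, hfc, hfmove, hfdist⟩ := paraconvex_step_aux h φ hφne hpc hφ C hCcl hCfin
      hCcov g hgc (fun T => a T n) (fun T => hapos T n) (ε n) (hεpos n) hginv
    refine ⟨f, hfc, ?_, hfmove⟩
    intro T x hx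
    have h1 := hfdist T x hx
    by_cases hc : n < T
    · have ha1 : a T (n + 1) = a T n + 1 := by
        show aSeq H T (n + 1) = aSeq H T n + 1
        rw [aSeq, if_pos hc]
      have hh1 : h (a T n) * a T n < a T n := by
        have hb := (hrange _ (hapos T n)).2
        nlinarith [hapos T n]
      have he1 := hεle n
      have he2 := hεle (n + 1)
      rw [ha1]
      linarith
    · push_neg at hc
      have ha1 : a T (n + 1) = H (a T n) * a T n := by
        show aSeq H T (n + 1) = H (aSeq H T n) * aSeq H T n
        rw [aSeq, if_neg (by omega)]
      have h2 := (hεσ T n hc).1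
      have h3 : ε (n + 1) ≤ σ T n / 4 := by
        have := (hεσ T (n + 1) (by omega)).2
        simpa using this
      have hexp : H (a T n) * a T n = h (a T n) * a T n + σ T n := by
        simp only [hσ]
        ring
      rw [ha1, hexp]
      linarith [hσpos T n]
  choose stepf hstepc hstepinv hstepd using hstep
  -- the sequence of approximations
  let Fa : ∀ n : ℕ, {g : X → E // Continuous g ∧ Inv n g} := fun n =>
    Nat.rec ⟨fun _ => (0 : E), continuous_const, hbase⟩
      (fun k ih => ⟨stepf k ih.1 ih.2.1 ih.2.2,
        hstepc k ih.1 ih.2.1 ih.2.2, hstepinv k ih.1 ih.2.1 ih.2.2⟩) n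
  set G : ℕ → X → E := fun n => (Fa n).1 with hG
  have hGcont : ∀ n, Continuous (G n) := fun n => (Fa n).2.1
  have hGinv : ∀ n, Inv n (G n) := fun n => (Fa n).2.2
  have hGsucc : ∀ n T, ∀ x ∈ C T, dist (G (n + 1) x) (G n x) < a T n := fun n =>
    hstepd n (Fa n).1 (Fa n).2.1 (Fa n).2.2
  -- pointwise limits
  have hcauchy : ∀ x, ∃ y, Tendsto (fun n => G n x) atTop (𝓝 y) := by
    intro x
    obtain ⟨T, hT⟩ := hCcov x
    apply cauchySeq_tendsto_of_complete
    apply cauchySeq_of_dist_le_of_summable (fun n => a T n) _ (hasum T)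
    intro n
    rw [dist_comm]
    exact le_of_lt (hGsucc n T x hT)
  choose f hf using hcauchy
  refine ⟨f, ?_, ?_⟩
  · -- continuity of the limit
    rw [continuous_iff_continuousAt]
    intro x₀
    obtain ⟨N₁, hN₁, hN₁fin⟩ := hCfin x₀
    set M : Finset ℕ := hN₁fin.toFinset with hM
    set D : ℕ → ℝ := fun n => ∑ T ∈ M, a T n with hD
    have hDsum : Summable D := summable_sum fun T _ => hasum T
    have hmemM : ∀ x ∈ N₁, ∀ T, x ∈ C T → T ∈ M := fun x hx T hT =>
      (Set.Finite.mem_toFinset _).2 ⟨x, hT, hx⟩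
    have hDbound : ∀ x ∈ N₁, ∀ n, dist (G n x) (G (n + 1) x) ≤ D n := by
      intro x hx n
      obtain ⟨T, hT⟩ := hCcov x
      have h1 : dist (G n x) (G (n + 1) x) ≤ a T n := by
        rw [dist_comm]; exact le_of_lt (hGsucc n T x hT)
      have h2 : a T n ≤ D n :=
        Finset.single_le_sum (fun T' _ => le_of_lt (hapos T' n)) (hmemM x hx T hT)
      linarith
    have htail : ∀ x ∈ N₁, ∀ n, dist (G n x) (f x) ≤ ∑' m, D (n + m) := fun x hx n =>
      dist_le_tsum_of_dist_le_of_tendsto D (hDbound x hx) hDsum (hf x) n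
    have htail0 : Tendsto (fun n => ∑' m, D (n + m)) atTop (𝓝 0) := by
      have h0 := tendsto_sum_nat_add D
      refine h0.congr fun n => ?_
      exact tsum_congr fun k => by rw [add_comm]
    have hUC : TendstoUniformlyOn G f atTop N₁ := by
      rw [Metric.tendstoUniformlyOn_iff]
      intro δ hδ
      have hev : ∀ᶠ n in atTop, ∑' m, D (n + m) < δ :=
        htail0.eventually (gt_mem_nhds hδ)
      filter_upwards [hev] with n hn x hx
      rw [dist_comm]
      exact lt_of_le_of_lt (htail x hx n) hn
    have hcont : ContinuousOn f N₁ :=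
      hUC.continuousOn (Eventually.of_forall fun n => (hGcont n).continuousOn).frequently
    exact hcont.continuousAt hN₁
  · -- the limit is a selection
    intro x
    obtain ⟨T, hT⟩ := hCcov x
    have h1 : ∀ n, Metric.infDist (G n x) (φ x) ≤ a T n := fun n =>
      le_of_lt (lt_of_lt_of_le (hGinv n T x hT) (by linarith [hεpos n]))
    have h2 : Tendsto (fun n => Metric.infDist (G n x) (φ x)) atTop
        (𝓝 (Metric.infDist (f x) (φ x))) :=
      ((Metric.continuous_infDist_pt (φ x)).tendsto (f x)).comp (hf x)
    have h3 : Tendsto (fun n => a T n) atTop (𝓝 0) := (hasum T).tendsto_atTop_zero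
    have h4 : Metric.infDist (f x) (φ x) ≤ 0 := le_of_tendsto_of_tendsto' h2 h3 h1
    have h5 : Metric.infDist (f x) (φ x) = 0 := le_antisymm h4 Metric.infDist_nonneg
    exact ((hφcl x).mem_iff_infDist_zero (hφne x)).2 h5
end

section
/- Let X be an arbitrary topological space, let E be a Banach space, let 0 ≤ α < 1, and let φ : X → F_α(E) be a d-continuous set-valued mapping whose values are nonempty closed α-paraconvex subsets of E. Then φ has a continuous selection. -/
open Set Metric Filter Topology Cardinal

universe u v

/-- A set `P` is `α`-paraconvex if whenever `r > 0` and `d(p,P) < r`, then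
`d(q,P) ≤ α·r` for every `q` in the convex hull of `B_r(p) ∩ P`. -/
def Paraconvex {E : Type*} [NormedAddCommGroup E] [NormedSpace ℝ E] (α : ℝ) (P : Set E) : Prop :=
  ∀ r : ℝ, 0 < r → ∀ p : E, Metric.infDist p P < r →
    ∀ q ∈ convexHull ℝ (Metric.ball p r ∩ P), Metric.infDist q P ≤ α * r

/-- A set-valued mapping is `d`-u.s.c. if for every `ε > 0` each point has a
neighbourhood `V` with `ψ z ⊆ B_ε(ψ x)` for all `z ∈ V`. -/
def DUscSV {X : Type*} {E : Type*} [TopologicalSpace X] [PseudoMetricSpace E]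
    (ψ : X → Set E) : Prop :=
  ∀ ε : ℝ, 0 < ε → ∀ x : X, ∀ᶠ z in nhds x, ψ z ⊆ Metric.thickening ε (ψ x)

/-- A set-valued mapping is `d`-l.s.c. if for every `ε > 0` each point has a
neighbourhood `V` with `ψ x ⊆ B_ε(ψ z)` for all `z ∈ V`. -/
def DLscSV {X : Type*} {E : Type*} [TopologicalSpace X] [PseudoMetricSpace E]
    (ψ : X → Set E) : Prop :=
  ∀ ε : ℝ, 0 < ε → ∀ x : X, ∀ᶠ z in nhds x, ψ x ⊆ Metric.thickening ε (ψ z)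

set_option linter.unusedSectionVars false

section Aux

variable {E : Type*} [NormedAddCommGroup E] [NormedSpace ℝ E]

lemma infDist_le_add_of_subset_thickening {s t : Set E} {ε : ℝ}
    (hs : s.Nonempty) (h : s ⊆ Metric.thickening ε t) (p : E) :
    Metric.infDist p t ≤ Metric.infDist p s + ε := by
  refine le_of_forall_pos_le_add fun η hη => ?_
  obtain ⟨q, hq, hdq⟩ := (Metric.infDist_lt_iff hs).1
    (lt_add_of_pos_right (Metric.infDist p s) hη)
  obtain ⟨q', hq', hqq'⟩ := Metric.mem_thickening_iff.1 (h hq)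
  have h1 : Metric.infDist p t ≤ dist p q' := Metric.infDist_le_dist_of_mem hq'
  have h2 : dist p q' ≤ dist p q + dist q q' := dist_triangle _ _ _
  linarith

lemma continuous_infDist_point {X : Type*} [TopologicalSpace X] {φ : X → Set E}
    (hne : ∀ x, (φ x).Nonempty) (hl : DLscSV φ) (hu : DUscSV φ) (p : E) :
    Continuous fun x => Metric.infDist p (φ x) := by
  rw [continuous_iff_continuousAt]
  intro x
  rw [ContinuousAt, Metric.tendsto_nhds]
  intro ε hε
  have h3 : 0 < ε / 3 := by linarith
  filter_upwards [hl (ε / 3) h3 x, hu (ε / 3) h3 x] with z hlz huz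
  have b1 : Metric.infDist p (φ z) ≤ Metric.infDist p (φ x) + ε / 3 :=
    infDist_le_add_of_subset_thickening (hne x) hlz p
  have b2 : Metric.infDist p (φ x) ≤ Metric.infDist p (φ z) + ε / 3 :=
    infDist_le_add_of_subset_thickening (hne z) huz p
  rw [Real.dist_eq, abs_lt]
  constructor <;> linarith

lemma selection_step {Y : Type*} [TopologicalSpace Y] [NormalSpace Y] [ParacompactSpace Y]
    {α : ℝ} {φ : Y → Set E}
    (hval : ∀ y, (φ y).Nonempty ∧ IsClosed (φ y) ∧ Paraconvex α (φ y))
    (hl : DLscSV φ)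
    {f : Y → E} (hf : Continuous f) {r : Y → ℝ} (hr : Continuous r)
    (hfr : ∀ y, Metric.infDist (f y) (φ y) < r y) {ε : ℝ} (hε : 0 < ε) :
    ∃ g : Y → E, Continuous g ∧ (∀ y, Metric.infDist (g y) (φ y) ≤ α * r y + ε) ∧
      ∀ y, ‖g y - f y‖ ≤ r y + ε := by
  classical
  have hrpos : ∀ y, 0 < r y := fun y => lt_of_le_of_lt Metric.infDist_nonneg (hfr y)
  have hp : ∀ y : Y, ∃ p, p ∈ φ y ∧ dist p (f y) < r y := by
    intro y
    obtain ⟨p, hpm, hpd⟩ := (Metric.infDist_lt_iff (hval y).1).1 (hfr y)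
    exact ⟨p, hpm, by rwa [dist_comm]⟩
  choose p hpφ hpf using hp
  set U : Y → Set Y := fun i => {x | ∃ q ∈ φ x, dist q (p i) < ε ∧ dist q (f x) < r x} with hU
  have hUopen : ∀ i, IsOpen (U i) := by
    intro i
    rw [isOpen_iff_mem_nhds]
    rintro x ⟨q, hqφ, hq1, hq2⟩
    set η := min ((ε - dist q (p i)) / 2) ((r x - dist q (f x)) / 3) with hηdef
    have hη0 : 0 < η := lt_min (by linarith) (by linarith)
    have hηa : η ≤ (ε - dist q (p i)) / 2 := min_le_left _ _
    have hηb : η ≤ (r x - dist q (f x)) / 3 := min_le_right _ _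
    have hfx : ∀ᶠ z in nhds x, dist (f z) (f x) < η :=
      Metric.tendsto_nhds.1 (hf.continuousAt (x := x)) η hη0
    have hrx : ∀ᶠ z in nhds x, dist (r z) (r x) < η :=
      Metric.tendsto_nhds.1 (hr.continuousAt (x := x)) η hη0
    filter_upwards [hl η hη0 x, hfx, hrx] with z hlz hfz hrz
    obtain ⟨q', hq'φ, hqq'⟩ := Metric.mem_thickening_iff.1 (hlz hqφ)
    have hq'q : dist q' q < η := by rwa [dist_comm] at hqq'
    refine ⟨q', hq'φ, ?_, ?_⟩
    · have ht : dist q' (p i) ≤ dist q' q + dist q (p i) := dist_triangle _ _ _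
      linarith
    · have ht : dist q' (f z) ≤ dist q' q + dist q (f x) + dist (f x) (f z) :=
        dist_triangle4 _ _ _ _
      rw [Real.dist_eq] at hrz
      have h1 : r x - r z < η := by
        have := abs_lt.1 hrz
        linarith [this.1, this.2]
      rw [dist_comm] at hfz
      linarith
  have hUcov : (univ : Set Y) ⊆ ⋃ i, U i := by
    intro x _
    refine mem_iUnion.2 ⟨x, p x, hpφ x, ?_, hpf x⟩
    simpa using hε
  obtain ⟨ρ, hρ⟩ := PartitionOfUnity.exists_isSubordinate isClosed_univ U hUopen hUcov
  set g : Y → E := fun x => ∑ᶠ i, ρ i x • p i with hgdef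
  have hgc : Continuous g :=
    ρ.continuous_finsum_smul (g := fun i _ => p i) (fun i x _ => continuousAt_const)
  have key : ∀ y, Metric.infDist (g y) (φ y) ≤ α * r y + ε ∧ ‖g y - f y‖ ≤ r y + ε := by
    intro y
    set T := ρ.finsupport y with hT
    have hsum1 : ∑ i ∈ T, ρ i y = 1 := ρ.sum_finsupport (mem_univ y)
    have hgy : g y = ∑ i ∈ T, ρ i y • p i :=
      (ρ.sum_finsupport_smul_eq_finsum (fun i _ => p i)).symm
    have hmemU : ∀ i ∈ T, ∃ q ∈ φ y, dist q (p i) < ε ∧ dist q (f y) < r y := by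
      intro i hi
      have h1 : ρ i y ≠ 0 := (ρ.mem_finsupport y).1 hi
      have h2 : y ∈ tsupport (ρ i) := subset_closure h1
      exact hρ i h2
    have hqex : ∀ i : Y, ∃ q : E, i ∈ T → q ∈ φ y ∧ dist q (p i) < ε ∧ dist q (f y) < r y := by
      intro i
      by_cases hi : i ∈ T
      · obtain ⟨q, h1, h2, h3⟩ := hmemU i hi
        exact ⟨q, fun _ => ⟨h1, h2, h3⟩⟩
      · exact ⟨f y, fun h => absurd h hi⟩
    choose q hq using hqex
    set m := ∑ i ∈ T, ρ i y • q i with hm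
    have hmmem : m ∈ convexHull ℝ (Metric.ball (f y) (r y) ∩ φ y) :=
      (convex_convexHull ℝ _).sum_mem (fun i _ => ρ.nonneg i y) hsum1
        (fun i hi => subset_convexHull ℝ _ ⟨Metric.mem_ball.2 ((hq i hi).2.2), (hq i hi).1⟩)
    have hpara : Metric.infDist m (φ y) ≤ α * r y :=
      (hval y).2.2 (r y) (hrpos y) (f y) (hfr y) m hmmem
    have hgm : ‖g y - m‖ ≤ ε := by
      rw [hgy, hm, ← Finset.sum_sub_distrib]
      have hb : ∀ i ∈ T, ‖ρ i y • p i - ρ i y • q i‖ ≤ ρ i y * ε := by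
        intro i hi
        rw [← smul_sub, norm_smul, Real.norm_of_nonneg (ρ.nonneg i y)]
        refine mul_le_mul_of_nonneg_left ?_ (ρ.nonneg i y)
        rw [← dist_eq_norm, dist_comm]
        exact le_of_lt (hq i hi).2.1
      calc ‖∑ i ∈ T, (ρ i y • p i - ρ i y • q i)‖ ≤ ∑ i ∈ T, ρ i y * ε :=
            norm_sum_le_of_le T hb
        _ = ε := by rw [← Finset.sum_mul, hsum1, one_mul]
    have hmf : ‖m - f y‖ ≤ r y := by
      have hrw : m - f y = ∑ i ∈ T, ρ i y • (q i - f y) := by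
        simp only [smul_sub]
        rw [Finset.sum_sub_distrib, ← Finset.sum_smul, hsum1, one_smul, hm]
      rw [hrw]
      have hb : ∀ i ∈ T, ‖ρ i y • (q i - f y)‖ ≤ ρ i y * r y := by
        intro i hi
        rw [norm_smul, Real.norm_of_nonneg (ρ.nonneg i y)]
        refine mul_le_mul_of_nonneg_left ?_ (ρ.nonneg i y)
        rw [← dist_eq_norm]
        exact le_of_lt (hq i hi).2.2
      calc ‖∑ i ∈ T, ρ i y • (q i - f y)‖ ≤ ∑ i ∈ T, ρ i y * r y := norm_sum_le_of_le T hb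
        _ = r y := by rw [← Finset.sum_mul, hsum1, one_mul]
    constructor
    · calc Metric.infDist (g y) (φ y) ≤ Metric.infDist m (φ y) + dist (g y) m :=
            Metric.infDist_le_infDist_add_dist
        _ ≤ α * r y + ε := by rw [dist_eq_norm]; linarith
    · calc ‖g y - f y‖ = dist (g y) (f y) := (dist_eq_norm _ _).symm
        _ ≤ dist (g y) m + dist m (f y) := dist_triangle _ _ _
        _ ≤ ε + r y := by rw [dist_eq_norm, dist_eq_norm]; linarith
        _ = r y + ε := by ring
  exact ⟨g, hgc, fun y => (key y).1, fun y => (key y).2⟩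

lemma selection_aux {Y : Type*} [TopologicalSpace Y] [NormalSpace Y] [ParacompactSpace Y]
    [CompleteSpace E] {α : ℝ} (hα0 : 0 ≤ α) (hα1 : α < 1) {φ : Y → Set E}
    (hval : ∀ y, (φ y).Nonempty ∧ IsClosed (φ y) ∧ Paraconvex α (φ y))
    (hl : DLscSV φ) (hu : DUscSV φ) :
    ∃ f : Y → E, Continuous f ∧ ∀ y, f y ∈ φ y := by
  classical
  set γ : ℝ := (1 + α) / 2 with hγdef
  have hαγ : α < γ := by rw [hγdef]; linarith
  have hγ1 : γ < 1 := by rw [hγdef]; linarith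
  have hγ0 : 0 < γ := by rw [hγdef]; linarith
  set R : Y → ℝ := fun y => Metric.infDist 0 (φ y) + 2 with hRdef
  have hR1 : ∀ y, 1 ≤ R y := fun y => by
    have := Metric.infDist_nonneg (x := (0 : E)) (s := φ y); rw [hRdef]; simp; linarith
  have hRcont : Continuous R :=
    (continuous_infDist_point (fun y => (hval y).1) hl hu 0).add continuous_const
  set r : ℕ → Y → ℝ := fun n => Nat.rec (fun y => Metric.infDist 0 (φ y) + 1)
      (fun n rn y => α * rn y + (γ - α) * γ ^ n) n with hrdef
  have hrs : ∀ n y, r (n + 1) y = α * r n y + (γ - α) * γ ^ n := fun n y => rfl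
  have hrc : ∀ n, Continuous (r n) := by
    intro n
    induction n with
    | zero =>
        exact (continuous_infDist_point (fun y => (hval y).1) hl hu 0).add continuous_const
    | succ n ih => exact (continuous_const.mul ih).add continuous_const
  have hrbound : ∀ n y, r n y ≤ γ ^ n * R y := by
    intro n
    induction n with
    | zero =>
        intro y
        have := hR1 y
        simp only [pow_zero, one_mul, hRdef]
        show Metric.infDist 0 (φ y) + 1 ≤ _
        linarith
    | succ n ih =>
        intro y
        have h1 := ih y
        have h2 := hR1 y
        have h3 : (0:ℝ) ≤ γ ^ n := le_of_lt (pow_pos hγ0 n)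
        have : r (n + 1) y = α * r n y + (γ - α) * γ ^ n := hrs n y
        rw [this, pow_succ]
        nlinarith [mul_le_mul_of_nonneg_left h1 hα0,
          mul_nonneg (mul_nonneg (by linarith : (0:ℝ) ≤ γ - α)
            (by linarith : (0:ℝ) ≤ R y - 1)) h3]
  have key : ∀ n (g : Y → E), Continuous g → (∀ y, Metric.infDist (g y) (φ y) < r n y) →
      ∃ g' : Y → E, Continuous g' ∧ (∀ y, Metric.infDist (g' y) (φ y) < r (n + 1) y) ∧
        ∀ y, ‖g' y - g y‖ ≤ r n y + (γ - α) / 2 * γ ^ n := by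
    intro n g hgc hgd
    have hεn : 0 < (γ - α) / 2 * γ ^ n :=
      mul_pos (by linarith) (pow_pos hγ0 n)
    obtain ⟨g', h1, h2, h3⟩ := selection_step hval hl hgc (hrc n) hgd hεn
    refine ⟨g', h1, fun y => ?_, h3⟩
    have h4 := h2 y
    have h5 : (γ - α) / 2 * γ ^ n < (γ - α) * γ ^ n := by nlinarith [pow_pos hγ0 n]
    calc Metric.infDist (g' y) (φ y) ≤ α * r n y + (γ - α) / 2 * γ ^ n := h4
      _ < α * r n y + (γ - α) * γ ^ n := by linarith
      _ = r (n + 1) y := (hrs n y).symm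
  have base : ∀ y, Metric.infDist ((fun _ => (0 : E)) y) (φ y) < r 0 y := by
    intro y
    show Metric.infDist 0 (φ y) < Metric.infDist 0 (φ y) + 1
    linarith
  let F : ∀ n : ℕ, {g : Y → E // Continuous g ∧ ∀ y, Metric.infDist (g y) (φ y) < r n y} :=
    fun n => Nat.rec ⟨fun _ => 0, continuous_const, base⟩
      (fun n prev => ⟨(key n prev.1 prev.2.1 prev.2.2).choose,
        (key n prev.1 prev.2.1 prev.2.2).choose_spec.1,
        (key n prev.1 prev.2.1 prev.2.2).choose_spec.2.1⟩) n
  have hstep : ∀ n y, ‖(F (n + 1)).1 y - (F n).1 y‖ ≤ r n y + (γ - α) / 2 * γ ^ n :=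
    fun n y => (key n (F n).1 (F n).2.1 (F n).2.2).choose_spec.2.2 y
  have hdiff : ∀ n y, dist ((F n).1 y) ((F (n + 1)).1 y) ≤ (R y + 1) * γ ^ n := by
    intro n y
    rw [dist_eq_norm, norm_sub_rev]
    have h1 := hstep n y
    have h2 := hrbound n y
    have h3 : (0:ℝ) ≤ γ ^ n := le_of_lt (pow_pos hγ0 n)
    have h4 : (γ - α) / 2 ≤ 1 := by linarith
    nlinarith
  have hcauchy : ∀ y, ∃ l : E, Tendsto (fun n => (F n).1 y) atTop (𝓝 l) := fun y =>
    cauchySeq_tendsto_of_complete (cauchySeq_of_le_geometric γ (R y + 1) hγ1 (fun n => hdiff n y))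
  choose flim hflim using hcauchy
  have hdistlim : ∀ n y, dist ((F n).1 y) (flim y) ≤ (R y + 1) * γ ^ n / (1 - γ) :=
    fun n y => dist_le_of_le_geometric_of_tendsto γ (R y + 1) hγ1 (fun m => hdiff m y)
      (hflim y) n
  have hmem : ∀ y, flim y ∈ φ y := by
    intro y
    rw [(hval y).2.1.mem_iff_infDist_zero (hval y).1]
    refine le_antisymm ?_ Metric.infDist_nonneg
    have hle : ∀ n : ℕ, Metric.infDist (flim y) (φ y) ≤
        γ ^ n * R y + (R y + 1) * γ ^ n / (1 - γ) := by
      intro n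
      calc Metric.infDist (flim y) (φ y)
          ≤ Metric.infDist ((F n).1 y) (φ y) + dist (flim y) ((F n).1 y) :=
            Metric.infDist_le_infDist_add_dist
        _ ≤ γ ^ n * R y + (R y + 1) * γ ^ n / (1 - γ) := by
            have h1 := le_of_lt ((F n).2.2 y)
            have h2 := hrbound n y
            have h3 := hdistlim n y
            rw [dist_comm] at h3
            exact add_le_add (le_trans h1 h2) h3
    have htend : Tendsto (fun n : ℕ => γ ^ n * R y + (R y + 1) * γ ^ n / (1 - γ)) atTop (𝓝 0) := by
      have hg : Tendsto (fun n : ℕ => γ ^ n) atTop (𝓝 0) :=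
        tendsto_pow_atTop_nhds_zero_of_lt_one (le_of_lt hγ0) hγ1
      have heq : (fun n : ℕ => γ ^ n * R y + (R y + 1) * γ ^ n / (1 - γ))
          = fun n : ℕ => γ ^ n * R y + γ ^ n * ((R y + 1) / (1 - γ)) := by
        funext n; ring
      rw [heq]
      simpa using (hg.mul_const (R y)).add (hg.mul_const ((R y + 1) / (1 - γ)))
    exact ge_of_tendsto htend (Eventually.of_forall hle)
  refine ⟨flim, ?_, hmem⟩
  rw [continuous_iff_continuousAt]
  intro y0
  set V : Set Y := {z | R z < R y0 + 1} with hVdef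
  have hVopen : IsOpen V := isOpen_lt hRcont continuous_const
  have hVmem : V ∈ 𝓝 y0 := hVopen.mem_nhds (by simp [hVdef])
  have hunif : TendstoUniformlyOn (fun n z => (F n).1 z) flim atTop V := by
    rw [Metric.tendstoUniformlyOn_iff]
    intro ε hε
    have htend : Tendsto (fun n : ℕ => (R y0 + 2) / (1 - γ) * γ ^ n) atTop (𝓝 0) := by
      have hg : Tendsto (fun n : ℕ => γ ^ n) atTop (𝓝 0) :=
        tendsto_pow_atTop_nhds_zero_of_lt_one (le_of_lt hγ0) hγ1
      simpa using hg.const_mul ((R y0 + 2) / (1 - γ))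
    filter_upwards [htend.eventually_lt_const hε] with n hn z hz
    rw [dist_comm]
    calc dist ((F n).1 z) (flim z) ≤ (R z + 1) * γ ^ n / (1 - γ) := hdistlim n z
      _ ≤ (R y0 + 2) * γ ^ n / (1 - γ) := by
          have h3 : (0:ℝ) ≤ γ ^ n := le_of_lt (pow_pos hγ0 n)
          have h4 : (0:ℝ) < 1 - γ := by linarith
          have h5 : R z + 1 ≤ R y0 + 2 := by
            have h6 : R z < R y0 + 1 := hz
            linarith
          gcongr
      _ = (R y0 + 2) / (1 - γ) * γ ^ n := by ring
      _ < ε := hn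
  have hFcont : ∀ᶠ n in atTop, ContinuousOn (fun z => (F n).1 z) V :=
    Eventually.of_forall fun n => ((F n).2.1).continuousOn
  exact (hunif.continuousOn hFcont.frequently).continuousAt hVmem

end Aux

/-- The hyperspace of nonempty closed `α`-paraconvex subsets of `E`. -/
def ParaHyper (E : Type*) [NormedAddCommGroup E] [NormedSpace ℝ E] (α : ℝ) : Type _ :=
  {S : Set E // IsClosed S ∧ S.Nonempty ∧ Paraconvex α S}

noncomputable instance ParaHyper.instEMetricSpace (E : Type*) [NormedAddCommGroup E]
    [NormedSpace ℝ E] (α : ℝ) : EMetricSpace (ParaHyper E α) where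
  edist s t := EMetric.hausdorffEdist s.1 t.1
  edist_self _ := EMetric.hausdorffEdist_self
  edist_comm _ _ := EMetric.hausdorffEdist_comm
  edist_triangle _ _ _ := EMetric.hausdorffEdist_triangle
  eq_of_edist_eq_zero {s t} h :=
    Subtype.ext <| (EMetric.hausdorffEdist_zero_iff_eq_of_closed s.2.1 t.2.1).1 h


/-- d-continuous paraconvex-valued mappings on arbitrary domains
admit continuous selections. -/
theorem paraconvex_selection_dContinuous
    (X : Type*) [TopologicalSpace X]
    (E : Type*) [NormedAddCommGroup E] [NormedSpace ℝ E] [CompleteSpace E]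
    (α : ℝ) (hα0 : 0 ≤ α) (hα1 : α < 1)
    (φ : X → Set E)
    (hφval : ∀ x, (φ x).Nonempty ∧ IsClosed (φ x) ∧ Paraconvex α (φ x))
    (hφdlsc : DLscSV φ) (hφdusc : DUscSV φ) :
    ∃ f : X → E, Continuous f ∧ ∀ x, f x ∈ φ x := by
  classical
  have hMval : ∀ C : ParaHyper E α,
      (C.1 : Set E).Nonempty ∧ IsClosed (C.1 : Set E) ∧ Paraconvex α (C.1 : Set E) :=
    fun C => ⟨C.2.2.1, C.2.1, C.2.2.2⟩
  have hMl : DLscSV (fun C : ParaHyper E α => (C.1 : Set E)) := by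
    intro ε hε C
    filter_upwards [EMetric.ball_mem_nhds C (ENNReal.ofReal_pos.2 hε)] with D hD
    intro q hq
    rw [Metric.mem_thickening_iff_infEdist_lt]
    calc EMetric.infEdist q (D.1 : Set E) ≤ EMetric.hausdorffEdist (C.1 : Set E) D.1 :=
        EMetric.infEdist_le_hausdorffEdist_of_mem hq
      _ = edist D C := by exact EMetric.hausdorffEdist_comm
      _ < ENNReal.ofReal ε := EMetric.mem_ball.1 hD
  have hMu : DUscSV (fun C : ParaHyper E α => (C.1 : Set E)) := by
    intro ε hε C
    filter_upwards [EMetric.ball_mem_nhds C (ENNReal.ofReal_pos.2 hε)] with D hD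
    intro q hq
    rw [Metric.mem_thickening_iff_infEdist_lt]
    calc EMetric.infEdist q (C.1 : Set E) ≤ EMetric.hausdorffEdist (D.1 : Set E) C.1 :=
        EMetric.infEdist_le_hausdorffEdist_of_mem hq
      _ = edist D C := rfl
      _ < ENNReal.ofReal ε := EMetric.mem_ball.1 hD
  obtain ⟨s, hsc, hsm⟩ := selection_aux hα0 hα1 hMval hMl hMu
  set ι : X → ParaHyper E α := fun x => ⟨φ x, (hφval x).2.1, (hφval x).1, (hφval x).2.2⟩ with hι
  have hιc : Continuous ι := by
    rw [continuous_iff_continuousAt]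
    intro x
    rw [ContinuousAt, EMetric.tendsto_nhds]
    intro ε hε
    obtain ⟨δ, _, hδ1, hδ2⟩ := ENNReal.lt_iff_exists_real_btwn.1 hε
    have hδpos : 0 < δ := ENNReal.ofReal_pos.1 hδ1
    filter_upwards [hφdlsc δ hδpos x, hφdusc δ hδpos x] with z hlz huz
    have h1 : EMetric.hausdorffEdist (φ z) (φ x) ≤ ENNReal.ofReal δ := by
      apply EMetric.hausdorffEdist_le_of_infEdist
      · exact fun q hq => le_of_lt (Metric.mem_thickening_iff_infEdist_lt.1 (huz hq))
      · exact fun q hq => le_of_lt (Metric.mem_thickening_iff_infEdist_lt.1 (hlz hq))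
    calc edist (ι z) (ι x) = EMetric.hausdorffEdist (φ z) (φ x) := rfl
      _ ≤ ENNReal.ofReal δ := h1
      _ < ε := hδ2
  exact ⟨s ∘ ι, hsc.comp hιc, fun x => hsm (ι x)⟩
end

section
/- A nonempty closed subset P of a normed space E is 0-paraconvex if and only if P is convex. -/
open Set Metric Filter Topology Cardinal

universe u v

/-- a nonempty closed set is 0-paraconvex iff it is convex. -/
theorem zeroParaconvex_iff_convex
    (E : Type*) [NormedAddCommGroup E] [NormedSpace ℝ E]
    (P : Set E) (hP : P.Nonempty) (hPc : IsClosed P) :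
    Paraconvex 0 P ↔ Convex ℝ P := by
  constructor
  · intro h
    rw [convex_iff_segment_subset]
    intro x hx y hy q hq
    set r := ‖x - y‖ + 1 with hr
    have hr0 : 0 < r := by positivity
    have hxr : x ∈ Metric.ball x r := by simp [hr0]
    have hyr : y ∈ Metric.ball x r := by
      simp only [Metric.mem_ball, dist_eq_norm]
      rw [norm_sub_rev]
      linarith [norm_nonneg (x - y)]
    have hdx : Metric.infDist x P < r := by
      rw [Metric.infDist_zero_of_mem hx]; exact hr0
    have hq' : q ∈ convexHull ℝ (Metric.ball x r ∩ P) :=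
      segment_subset_convexHull (Set.mem_inter hxr hx) (Set.mem_inter hyr hy) hq
    have := h r hr0 x hdx q hq'
    rw [zero_mul] at this
    have h0 : Metric.infDist q P = 0 :=
      le_antisymm this (Metric.infDist_nonneg)
    rw [← hPc.closure_eq, Metric.mem_closure_iff_infDist_zero hP]
    exact h0
  · intro h r hr p hp q hq
    have : q ∈ P := h.convexHull_subset_iff.2 inter_subset_right hq
    rw [Metric.infDist_zero_of_mem this, zero_mul]
end

section
/- Let X be a paracompact Hausdorff space and let E be a Banach space. Then every lower semicontinuous set-valued mapping φ : X → F(E) whose values are nonempty closed convex subsets of E has a continuous selection. -/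
open Set Metric Filter Topology Cardinal Pointwise

universe u v

section MichaelAux

variable {X : Type*} [TopologicalSpace X] [ParacompactSpace X] [T2Space X]
  {E : Type*} [NormedAddCommGroup E] [NormedSpace ℝ E]

/-- The intersection of an l.s.c. mapping with open balls around a continuous function
is l.s.c. -/
lemma lsc_inter_ball {φ : X → Set E} (hφ : LowerSemicontinuousSV φ)
    {g : X → E} (hg : Continuous g) {ε : ℝ} (hε : 0 < ε) :
    LowerSemicontinuousSV (fun x => φ x ∩ ball (g x) ε) := by
  intro U hU
  rw [isOpen_iff_mem_nhds]
  rintro x₀ ⟨z, ⟨hzφ, hzb⟩, hzU⟩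
  obtain ⟨r, hr, hrU⟩ := Metric.isOpen_iff.1 hU z hzU
  have hdz : dist z (g x₀) < ε := mem_ball.1 hzb
  set δ : ℝ := min r ((ε - dist z (g x₀)) / 2) with hδdef
  have hδ : 0 < δ := lt_min hr (by linarith)
  have hV1 : IsOpen {x | (φ x ∩ ball z δ).Nonempty} := hφ _ isOpen_ball
  have hV2 : IsOpen (g ⁻¹' ball (g x₀) δ) := isOpen_ball.preimage hg
  have hx₀ : x₀ ∈ {x | (φ x ∩ ball z δ).Nonempty} ∩ g ⁻¹' ball (g x₀) δ :=
    ⟨⟨z, hzφ, mem_ball_self hδ⟩, mem_ball_self hδ⟩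
  refine Filter.mem_of_superset ((hV1.inter hV2).mem_nhds hx₀) ?_
  rintro x ⟨⟨w, hwφ, hwz⟩, hgx⟩
  have h1 : dist w z < δ := mem_ball.1 hwz
  have h2 : dist (g x) (g x₀) < δ := mem_ball.1 hgx
  have h3 : δ ≤ (ε - dist z (g x₀)) / 2 := min_le_right _ _
  have h4 : δ ≤ r := min_le_left _ _
  refine ⟨w, ⟨hwφ, mem_ball.2 ?_⟩, hrU (mem_ball.2 (lt_of_lt_of_le h1 h4))⟩
  calc dist w (g x) ≤ dist w z + dist z (g x₀) + dist (g x₀) (g x) := dist_triangle4 _ _ _ _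
    _ < δ + dist z (g x₀) + δ := by rw [dist_comm (g x₀)]; linarith
    _ ≤ ε := by linarith

/-- Approximate selection: an l.s.c. mapping with nonempty convex values admits a
continuous ε-approximate selection. -/
lemma approx_selection {φ : X → Set E}
    (hne : ∀ x, (φ x).Nonempty) (hconv : ∀ x, Convex ℝ (φ x))
    (hφ : LowerSemicontinuousSV φ) {ε : ℝ} (hε : 0 < ε) :
    ∃ f : X → E, Continuous f ∧ ∀ x, f x ∈ φ x + ball (0 : E) ε := by
  have H : ∀ x : X, ∃ U ∈ 𝓝 x, ∃ g : X → E, ContinuousOn g U ∧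
      ∀ y ∈ U, g y ∈ φ y + ball (0 : E) ε := by
    intro x
    obtain ⟨y, hy⟩ := hne x
    refine ⟨{z | (φ z ∩ ball y ε).Nonempty},
      (hφ _ isOpen_ball).mem_nhds ⟨y, hy, mem_ball_self hε⟩,
      fun _ => y, continuousOn_const, ?_⟩
    rintro z ⟨w, hwφ, hwb⟩
    refine ⟨w, hwφ, y - w, mem_ball_zero_iff.2 ?_, by simp⟩
    rw [norm_sub_rev, ← dist_eq_norm]
    exact mem_ball.1 hwb
  obtain ⟨g, hg⟩ := exists_continuous_forall_mem_convex_of_local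
    (t := fun x => φ x + ball (0 : E) ε)
    (fun x => (hconv x).add (convex_ball (0 : E) ε)) H
  exact ⟨g, g.continuous, hg⟩

/-- Iteration step: improve an ε-approximate selection to an ε'-approximate one, moving
by less than ε + ε'. -/
lemma step_selection {φ : X → Set E}
    (hconv : ∀ x, Convex ℝ (φ x)) (hφ : LowerSemicontinuousSV φ)
    {ε ε' : ℝ} (hε : 0 < ε) (hε' : 0 < ε')
    (f : X → E) (hfc : Continuous f) (hf : ∀ x, f x ∈ φ x + ball (0 : E) ε) :
    ∃ f' : X → E, Continuous f' ∧ (∀ x, f' x ∈ φ x + ball (0 : E) ε') ∧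
      ∀ x, dist (f' x) (f x) < ε + ε' := by
  set ψ : X → Set E := fun x => φ x ∩ ball (f x) ε with hψ
  have hψne : ∀ x, (ψ x).Nonempty := by
    intro x
    obtain ⟨a, haφ, b, hb, hab⟩ := hf x
    refine ⟨a, haφ, mem_ball.2 ?_⟩
    have hb' := mem_ball_zero_iff.1 hb
    have hab' : a - f x = -b := by rw [← hab, sub_add_cancel_left]
    rw [dist_eq_norm, hab', norm_neg]
    exact hb'
  have hψconv : ∀ x, Convex ℝ (ψ x) := fun x => (hconv x).inter (convex_ball _ _)
  have hψlsc : LowerSemicontinuousSV ψ := lsc_inter_ball hφ hfc hε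
  obtain ⟨f', hf'c, hf'⟩ := approx_selection hψne hψconv hψlsc hε'
  refine ⟨f', hf'c, fun x => ?_, fun x => ?_⟩
  · exact add_subset_add_right inter_subset_left (hf' x)
  · obtain ⟨a, ⟨haφ, hab⟩, b, hb, habe⟩ := hf' x
    have h1 : dist (f' x) a < ε' := by
      have hb' := mem_ball_zero_iff.1 hb
      have : f' x - a = b := by rw [← habe]; exact add_sub_cancel_left a b
      rw [dist_eq_norm, this]
      exact hb'
    calc dist (f' x) (f x) ≤ dist (f' x) a + dist a (f x) := dist_triangle _ _ _
      _ < ε' + ε := add_lt_add h1 (mem_ball.1 hab)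
      _ = ε + ε' := add_comm _ _

end MichaelAux

/-- Michael's convex-valued selection theorem on paracompact
spaces. -/
theorem michael_selection_paracompact
    (X : Type*) [TopologicalSpace X] [ParacompactSpace X] [T2Space X]
    (E : Type*) [NormedAddCommGroup E] [NormedSpace ℝ E] [CompleteSpace E]
    (φ : X → Set E)
    (hφval : ∀ x, (φ x).Nonempty ∧ IsClosed (φ x) ∧ Convex ℝ (φ x))
    (hφ : LowerSemicontinuousSV φ) :
    ∃ f : X → E, Continuous f ∧ ∀ x, f x ∈ φ x := by
  have hne : ∀ x, (φ x).Nonempty := fun x => (hφval x).1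
  have hcl : ∀ x, IsClosed (φ x) := fun x => (hφval x).2.1
  have hconv : ∀ x, Convex ℝ (φ x) := fun x => (hφval x).2.2
  have hεpos : ∀ n : ℕ, (0 : ℝ) < (2 : ℝ)⁻¹ ^ n := fun n => pow_pos (by norm_num) n
  have key : ∀ n : ℕ,
      ∀ p : {f : X → E // Continuous f ∧ ∀ x, f x ∈ φ x + ball (0 : E) ((2 : ℝ)⁻¹ ^ n)},
      ∃ f' : X → E, (Continuous f' ∧ ∀ x, f' x ∈ φ x + ball (0 : E) ((2 : ℝ)⁻¹ ^ (n + 1))) ∧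
        ∀ x, dist (f' x) (p.1 x) < (2 : ℝ)⁻¹ ^ n + (2 : ℝ)⁻¹ ^ (n + 1) := by
    rintro n ⟨f, hfc, hfm⟩
    obtain ⟨f', h1, h2, h3⟩ := step_selection hconv hφ (hεpos n) (hεpos (n + 1)) f hfc hfm
    exact ⟨f', ⟨h1, h2⟩, h3⟩
  obtain ⟨f₀, hf₀c, hf₀⟩ := approx_selection hne hconv hφ (hεpos 0)
  let F : ∀ n : ℕ, {f : X → E // Continuous f ∧ ∀ x, f x ∈ φ x + ball (0 : E) ((2 : ℝ)⁻¹ ^ n)} :=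
    fun n => Nat.rec ⟨f₀, hf₀c, hf₀⟩
      (fun n p => ⟨(key n p).choose, (key n p).choose_spec.1⟩) n
  have hFd : ∀ n x, dist ((F (n + 1)).1 x) ((F n).1 x) < (2 : ℝ)⁻¹ ^ n + (2 : ℝ)⁻¹ ^ (n + 1) :=
    fun n x => (key n (F n)).choose_spec.2 x
  have hgeom : ∀ x, ∀ n, dist ((F n).1 x) ((F (n + 1)).1 x) ≤ 2 * (2 : ℝ)⁻¹ ^ n := by
    intro x n
    rw [dist_comm]
    have h1 := (hFd n x).le
    have h2 : (2 : ℝ)⁻¹ ^ (n + 1) ≤ (2 : ℝ)⁻¹ ^ n := by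
      apply pow_le_pow_of_le_one (by norm_num) (by norm_num) (by omega)
    linarith
  have hlim : ∀ x, ∃ l : E, Tendsto (fun n => (F n).1 x) atTop (𝓝 l) := fun x =>
    cauchySeq_tendsto_of_complete
      (cauchySeq_of_le_geometric (2 : ℝ)⁻¹ 2 (by norm_num) (hgeom x))
  choose f hf using hlim
  have hdistf : ∀ n x, dist ((F n).1 x) (f x) ≤ 4 * (2 : ℝ)⁻¹ ^ n := by
    intro n x
    have h := dist_le_of_le_geometric_of_tendsto (2 : ℝ)⁻¹ 2 (by norm_num) (hgeom x) (hf x) n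
    have he : 2 * (2 : ℝ)⁻¹ ^ n / (1 - 2⁻¹) = 4 * (2 : ℝ)⁻¹ ^ n := by
      rw [show (1 : ℝ) - 2⁻¹ = 2⁻¹ by norm_num]
      field_simp
      ring
    rwa [he] at h
  have hbound : Tendsto (fun n : ℕ => 4 * (2 : ℝ)⁻¹ ^ n) atTop (𝓝 0) := by
    have h := tendsto_pow_atTop_nhds_zero_of_lt_one
      (by norm_num : (0 : ℝ) ≤ 2⁻¹) (by norm_num : (2 : ℝ)⁻¹ < 1)
    simpa using h.const_mul (4 : ℝ)
  have htu : TendstoUniformly (fun n x => (F n).1 x) f atTop := by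
    rw [Metric.tendstoUniformly_iff]
    intro δ hδ
    filter_upwards [hbound.eventually (gt_mem_nhds hδ)] with n hn x
    calc dist (f x) ((F n).1 x) = dist ((F n).1 x) (f x) := dist_comm _ _
      _ ≤ 4 * (2 : ℝ)⁻¹ ^ n := hdistf n x
      _ < δ := hn
  have hfc : Continuous f := htu.continuous (Eventually.of_forall fun n => (F n).2.1).frequently
  refine ⟨f, hfc, fun x => ?_⟩
  rw [← (hcl x).closure_eq, Metric.mem_closure_iff]
  intro δ hδ
  obtain ⟨n, hn⟩ := exists_pow_lt_of_lt_one (show (0 : ℝ) < δ / 5 by linarith)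
    (by norm_num : (2 : ℝ)⁻¹ < 1)
  obtain ⟨a, haφ, b, hb, hab⟩ := (F n).2.2 x
  have hd1 : dist ((F n).1 x) a < (2 : ℝ)⁻¹ ^ n := by
    have hb' := mem_ball_zero_iff.1 hb
    have : (F n).1 x - a = b := by rw [← hab]; exact add_sub_cancel_left a b
    rw [dist_eq_norm, this]
    exact hb'
  refine ⟨a, haφ, ?_⟩
  calc dist (f x) a ≤ dist (f x) ((F n).1 x) + dist ((F n).1 x) a := dist_triangle _ _ _
    _ < 4 * (2 : ℝ)⁻¹ ^ n + (2 : ℝ)⁻¹ ^ n := by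
        have := hdistf n x
        rw [dist_comm (f x)]
        linarith
    _ = 5 * (2 : ℝ)⁻¹ ^ n := by ring
    _ < δ := by linarith
end

section
/- Let X be a paracompact Hausdorff space, let A ⊆ X be closed, let E be a Banach space, let 0 ≤ α < 1, and let Y be a nonempty closed α-paraconvex subset of E. Then every continuous map g : A → Y can be extended to a continuous map f : X → Y (i.e., f is continuous on X, takes values in Y, and f restricted to A equals g). -/
open Set Metric Filter Topology Cardinal

universe u v

section Aux

set_option linter.unusedSectionVars false

variable {X : Type*} {E : Type*} [TopologicalSpace X] [ParacompactSpace X] [T2Space X]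
  [NormedAddCommGroup E] [NormedSpace ℝ E]

/-- Convex combination of constants via a partition of unity subordinate to an open cover. -/
lemma pou_comb {ι : Type*} (c : ι → E) (W : ι → Set X) (hWo : ∀ i, IsOpen (W i))
    (hcov : ∀ x, ∃ i, x ∈ W i) :
    ∃ f : X → E, Continuous f ∧ ∀ x, f x ∈ convexHull ℝ (c '' {i | x ∈ W i}) := by
  obtain ⟨p, hp⟩ := PartitionOfUnity.exists_isSubordinate isClosed_univ W hWo
    (fun x _ => mem_iUnion.2 (hcov x))
  refine ⟨fun x => ∑ᶠ i, p i x • c i, ?_, ?_⟩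
  · refine continuous_finsum (fun i => ((p i).continuous.smul continuous_const)) ?_
    refine p.locallyFinite.subset fun i x hx => ?_
    simp only [Function.mem_support] at hx ⊢
    intro h; exact hx (by simp [h])
  · intro x
    have hsum := p.sum_finsupport (mem_univ x)
    have heq := p.sum_finsupport_smul_eq_finsum (x₀ := x) (φ := fun i _ => c i)
    show (∑ᶠ (i : ι), (p i) x • c i) ∈ _
    rw [← heq, ← Finset.centerMass_eq_of_sum_1 _ _ hsum]
    refine Finset.centerMass_mem_convexHull _ (fun i _ => p.nonneg i x)
      (by rw [hsum]; norm_num) ?_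
    intro i hi
    exact ⟨i, hp i (subset_closure ((p.mem_finsupport x).1 hi)), rfl⟩

/-- The set-valued map: `{g x}` on `A`, `Y` elsewhere. -/
def phiSV {X : Type*} {E : Type*} [TopologicalSpace X] (A : Set X) (Y : Set E) (g : A → E) :
    X → Set E := fun x => {z | z ∈ Y ∧ ∀ h : x ∈ A, z = g ⟨x, h⟩}

lemma open_W {A : Set X} {Y : Set E} {g : A → E} (hA : IsClosed A) (hg : Continuous g)
    (hgY : ∀ a : A, g a ∈ Y) (Q : X → E → Prop)
    (hQ : ∀ x0 z0, Q x0 z0 → ∃ η > 0, ∃ N ∈ 𝓝 x0, ∀ x ∈ N, ∀ z, dist z z0 < η → Q x z) :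
    IsOpen {x | ∃ z ∈ phiSV A Y g x, Q x z} := by
  rw [isOpen_iff_mem_nhds]
  rintro x0 ⟨z0, ⟨hz0Y, hz0A⟩, hQ0⟩
  obtain ⟨η, ηpos, N, hN, hball⟩ := hQ x0 z0 hQ0
  by_cases hA0 : x0 ∈ A
  · have hz0 : z0 = g ⟨x0, hA0⟩ := hz0A hA0
    have hgc : {a : A | dist (g a) z0 < η} ∈ 𝓝 (⟨x0, hA0⟩ : A) :=
      (isOpen_lt (hg.dist continuous_const) continuous_const).mem_nhds
        (by simp [hz0, ηpos])
    rw [nhds_subtype_eq_comap, Filter.mem_comap] at hgc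
    obtain ⟨V, hV, hVS⟩ := hgc
    refine Filter.mem_of_superset (Filter.inter_mem hN hV) ?_
    rintro x ⟨hxN, hxV⟩
    by_cases hxA : x ∈ A
    · refine ⟨g ⟨x, hxA⟩, ⟨hgY _, fun h => rfl⟩, hball x hxN _ ?_⟩
      exact hVS (show (⟨x, hxA⟩ : A) ∈ _ from hxV)
    · exact ⟨z0, ⟨hz0Y, fun h => absurd h hxA⟩, hball x hxN z0 (by simp [ηpos])⟩
  · refine Filter.mem_of_superset (Filter.inter_mem hN (hA.isOpen_compl.mem_nhds hA0)) ?_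
    rintro x ⟨hxN, hxA⟩
    exact ⟨z0, ⟨hz0Y, fun h => absurd h hxA⟩, hball x hxN z0 (by simp [ηpos])⟩

lemma step_lemma {A : Set X} {Y : Set E} {g : A → E} {α : ℝ}
    (hA : IsClosed A) (hα0 : 0 ≤ α) (hα1 : α < 1)
    (hY : Y.Nonempty) (hYp : Paraconvex α Y) (hg : Continuous g) (hgY : ∀ a : A, g a ∈ Y)
    (f : X → E) (hf : Continuous f) (r : X → ℝ) (hrc : Continuous r) (hrpos : ∀ x, 0 < r x)
    (h1 : ∀ x, infDist (f x) Y < r x) (h2 : ∀ a : A, dist (f ↑a) (g a) < r ↑a) :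
    ∃ f' : X → E, Continuous f' ∧
      (∀ x, infDist (f' x) Y ≤ α * ((1 + (1 - α) / 4) * r x)) ∧
      (∀ a : A, dist (f' ↑a) (g a) < (1 - α) / 4 * r ↑a) ∧
      (∀ x, dist (f' x) (f x) < (1 + (1 - α) / 4) * r x) := by
  set ε : ℝ := (1 - α) / 4 with hεdef
  have hε : 0 < ε := by simp only [hεdef]; linarith
  -- the cover
  set W : Y → Set X := fun y =>
    {x | ∃ z ∈ phiSV A Y g x, dist z (f x) < r x ∧ dist z (y : E) < ε * r x} with hWdef
  have hWo : ∀ y : Y, IsOpen (W y) := by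
    intro y
    refine open_W hA hg hgY _ ?_
    rintro x0 z0 ⟨q1, q2⟩
    refine ⟨min ((r x0 - dist z0 (f x0)) / 2) ((ε * r x0 - dist z0 (y : E)) / 2),
      lt_min (by linarith) (by linarith), {x | dist z0 (f x) + min ((r x0 - dist z0 (f x0)) / 2)
        ((ε * r x0 - dist z0 (y : E)) / 2) < r x ∧
        dist z0 (y : E) + min ((r x0 - dist z0 (f x0)) / 2)
        ((ε * r x0 - dist z0 (y : E)) / 2) < ε * r x}, ?_, ?_⟩
    · refine IsOpen.mem_nhds ?_ ?_
      · exact (isOpen_lt (by fun_prop) hrc).inter (isOpen_lt (by fun_prop)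
          (continuous_const.mul hrc))
      · constructor
        · have := min_le_left ((r x0 - dist z0 (f x0)) / 2) ((ε * r x0 - dist z0 (y : E)) / 2)
          linarith
        · have := min_le_right ((r x0 - dist z0 (f x0)) / 2) ((ε * r x0 - dist z0 (y : E)) / 2)
          linarith
    · rintro x ⟨hx1, hx2⟩ z hz
      constructor
      · calc dist z (f x) ≤ dist z z0 + dist z0 (f x) := dist_triangle _ _ _
          _ < _ := by linarith
      · calc dist z (y : E) ≤ dist z z0 + dist z0 (y : E) := dist_triangle _ _ _
          _ < _ := by linarith
  have hWcov : ∀ x, ∃ y : Y, x ∈ W y := by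
    intro x
    by_cases hxA : x ∈ A
    · refine ⟨⟨g ⟨x, hxA⟩, hgY _⟩, g ⟨x, hxA⟩, ⟨hgY _, fun h => rfl⟩, ?_, ?_⟩
      · rw [dist_comm]; exact h2 ⟨x, hxA⟩
      · simpa using mul_pos hε (hrpos x)
    · obtain ⟨z, hzY, hzd⟩ := (infDist_lt_iff hY).1 (h1 x)
      exact ⟨⟨z, hzY⟩, z, ⟨hzY, fun h => absurd h hxA⟩, by rwa [dist_comm], by
        simpa using mul_pos hε (hrpos x)⟩
  obtain ⟨f', hf'c, hf'mem⟩ := pou_comb (fun y : Y => (y : E)) W hWo hWcov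
  have key : ∀ x, (fun y : Y => (y : E)) '' {y : Y | x ∈ W y} ⊆
      Metric.ball (f x) ((1 + ε) * r x) ∩ Y := by
    rintro x e ⟨y, hy, rfl⟩
    obtain ⟨z, ⟨hzY, _⟩, hz1, hz2⟩ := hy
    refine ⟨mem_ball.2 ?_, y.2⟩
    calc dist (y : E) (f x) ≤ dist (y : E) z + dist z (f x) := dist_triangle _ _ _
      _ < ε * r x + r x := by rw [dist_comm (y : E) z]; exact add_lt_add hz2 hz1
      _ = (1 + ε) * r x := by ring
  refine ⟨f', hf'c, ?_, ?_, ?_⟩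
  · intro x
    refine hYp ((1 + ε) * r x) (mul_pos (by linarith) (hrpos x)) (f x) ?_ (f' x)
      (convexHull_mono (key x) (hf'mem x))
    calc infDist (f x) Y < r x := h1 x
      _ ≤ (1 + ε) * r x := by nlinarith [hrpos x]
  · intro a
    have him : (fun y : Y => (y : E)) '' {y : Y | (↑a : X) ∈ W y} ⊆
        Metric.ball (g a) (ε * r ↑a) := by
      rintro e ⟨y, hy, rfl⟩
      obtain ⟨z, ⟨hzY, hzA⟩, hz1, hz2⟩ := hy
      have hza : z = g a := hzA a.2
      rw [mem_ball, dist_comm, ← hza]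
      exact hz2
    have := convexHull_mono him (hf'mem ↑a)
    rw [(convex_ball _ _).convexHull_eq] at this
    exact mem_ball.1 this
  · intro x
    have := convexHull_mono ((key x).trans inter_subset_left) (hf'mem x)
    rw [(convex_ball _ _).convexHull_eq] at this
    exact mem_ball.1 this


end Aux

/-- continuous maps into a closed paraconvex set extend from
closed subsets of paracompact spaces. -/
theorem extension_into_paraconvex
    (X : Type*) [TopologicalSpace X] [ParacompactSpace X] [T2Space X]
    (A : Set X) (hA : IsClosed A)
    (E : Type*) [NormedAddCommGroup E] [NormedSpace ℝ E] [CompleteSpace E]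
    (α : ℝ) (hα0 : 0 ≤ α) (hα1 : α < 1)
    (Y : Set E) (hY : Y.Nonempty) (hYc : IsClosed Y) (hYp : Paraconvex α Y)
    (g : A → E) (hg : Continuous g) (hgY : ∀ a : A, g a ∈ Y) :
    ∃ f : X → E, Continuous f ∧ (∀ x, f x ∈ Y) ∧ ∀ a : A, f a = g a := by
  classical
  have hφne : ∀ x, ∃ z, z ∈ phiSV A Y g x := by
    intro x
    by_cases hxA : x ∈ A
    · exact ⟨g ⟨x, hxA⟩, hgY _, fun h => rfl⟩
    · exact ⟨hY.choose, hY.choose_spec, fun h => absurd h hxA⟩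
  -- base approximation
  set W0 : Y → Set X := fun y => {x | ∃ z ∈ phiSV A Y g x, dist z (y : E) < 1} with hW0
  have hW0o : ∀ y : Y, IsOpen (W0 y) := by
    intro y
    refine open_W hA hg hgY _ ?_
    intro x0 z0 hq
    refine ⟨(1 - dist z0 (y : E)) / 2, by linarith,
      univ, univ_mem, ?_⟩
    intro x _ z hz
    calc dist z (y : E) ≤ dist z z0 + dist z0 (y : E) := dist_triangle _ _ _
      _ < 1 := by linarith
  have hW0cov : ∀ x, ∃ y : Y, x ∈ W0 y := by
    intro x
    obtain ⟨z, hz⟩ := hφne x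
    exact ⟨⟨z, hz.1⟩, z, hz, by simp⟩
  obtain ⟨f₀, hf₀c, hf₀mem⟩ := pou_comb (fun y : Y => (y : E)) W0 hW0o hW0cov
  have hf₀A : ∀ a : A, dist (f₀ ↑a) (g a) < 1 := by
    intro a
    have him : (fun y : Y => (y : E)) '' {y : Y | (↑a : X) ∈ W0 y} ⊆ Metric.ball (g a) 1 := by
      rintro e ⟨y, hy, rfl⟩
      obtain ⟨z, ⟨hzY, hzA⟩, hz⟩ := hy
      have hza : z = g a := hzA a.2
      rw [mem_ball, dist_comm, ← hza]
      exact hz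
    have := convexHull_mono him (hf₀mem ↑a)
    rw [(convex_ball _ _).convexHull_eq] at this
    exact mem_ball.1 this
  set r₀ : X → ℝ := fun x => infDist (f₀ x) Y + 1 with hr₀def
  have hr₀c : Continuous r₀ := ((continuous_infDist_pt Y).comp hf₀c).add continuous_const
  have hr₀pos : ∀ x, 0 < r₀ x := fun x => by
    have := infDist_nonneg (x := f₀ x) (s := Y); simp only [hr₀def]; linarith
  have hr₀ge1 : ∀ x, 1 ≤ r₀ x := fun x => by
    have := infDist_nonneg (x := f₀ x) (s := Y); simp only [hr₀def]; linarith
  set θ : ℝ := (1 + α) / 2 with hθdef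
  have hθ0 : 0 < θ := by rw [hθdef]; linarith
  have hθ1 : θ < 1 := by rw [hθdef]; linarith
  have hkey : α * (1 + (1 - α) / 4) < θ := by rw [hθdef]; nlinarith
  have hkey2 : (1 - α) / 4 < θ := by rw [hθdef]; linarith
  let Good : ℕ → (X → E) → Prop := fun n f =>
    Continuous f ∧ (∀ x, infDist (f x) Y < θ ^ n * r₀ x) ∧
      (∀ a : A, dist (f ↑a) (g a) < θ ^ n * r₀ ↑a)
  have good0 : Good 0 f₀ := by
    refine ⟨hf₀c, fun x => ?_, fun a => ?_⟩
    · simp only [pow_zero, one_mul, hr₀def]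
      linarith [lt_add_one (infDist (f₀ x) Y)]
    · simp only [pow_zero, one_mul]
      exact lt_of_lt_of_le (hf₀A a) (hr₀ge1 _)
  have hstep : ∀ n (f : X → E), Good n f →
      ∃ f', Good (n + 1) f' ∧ ∀ x, dist (f' x) (f x) ≤ 2 * r₀ x * θ ^ n := by
    intro n f hGf
    obtain ⟨hfc, hf1, hf2⟩ := hGf
    obtain ⟨f', hf'c, hP1, hP2, hP3⟩ := step_lemma hA hα0 hα1 hY hYp hg hgY f hfc
      (fun x => θ ^ n * r₀ x) (by fun_prop) (fun x => mul_pos (pow_pos hθ0 n) (hr₀pos x)) hf1 hf2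
    have hpow : ∀ x, 0 < θ ^ n * r₀ x := fun x => mul_pos (pow_pos hθ0 n) (hr₀pos x)
    refine ⟨f', ⟨hf'c, fun x => ?_, fun a => ?_⟩, fun x => ?_⟩
    · calc infDist (f' x) Y ≤ α * ((1 + (1 - α) / 4) * (θ ^ n * r₀ x)) := hP1 x
        _ = (α * (1 + (1 - α) / 4)) * (θ ^ n * r₀ x) := by ring
        _ < θ * (θ ^ n * r₀ x) := mul_lt_mul_of_pos_right hkey (hpow x)
        _ = θ ^ (n + 1) * r₀ x := by ring
    · calc dist (f' ↑a) (g a) < (1 - α) / 4 * (θ ^ n * r₀ ↑a) := hP2 a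
        _ < θ * (θ ^ n * r₀ ↑a) := mul_lt_mul_of_pos_right hkey2 (hpow _)
        _ = θ ^ (n + 1) * r₀ ↑a := by ring
    · have h3 := (hP3 x).le
      have h4 : (1 + (1 - α) / 4) * (θ ^ n * r₀ x) ≤ 2 * (θ ^ n * r₀ x) :=
        mul_le_mul_of_nonneg_right (by linarith) (hpow x).le
      calc dist (f' x) (f x) ≤ (1 + (1 - α) / 4) * (θ ^ n * r₀ x) := h3
        _ ≤ 2 * (θ ^ n * r₀ x) := h4
        _ = 2 * r₀ x * θ ^ n := by ring
  choose stepf hstep1 hstep2 using hstep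
  let u : ∀ n : ℕ, {f : X → E // Good n f} := fun n =>
    Nat.rec ⟨f₀, good0⟩ (fun n p => ⟨stepf n p.1 p.2, hstep1 n p.1 p.2⟩) n
  have hu : ∀ n, (u (n + 1)).1 = stepf n (u n).1 (u n).2 := fun n => rfl
  have hdist : ∀ n x, dist ((u n).1 x) ((u (n + 1)).1 x) ≤ (2 * r₀ x) * θ ^ n := by
    intro n x
    rw [dist_comm, hu n]
    exact hstep2 n (u n).1 (u n).2 x
  have hcauchy : ∀ x, ∃ l, Tendsto (fun n => (u n).1 x) atTop (𝓝 l) := fun x =>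
    cauchySeq_tendsto_of_complete
      (cauchySeq_of_le_geometric θ (2 * r₀ x) hθ1 (fun n => hdist n x))
  choose f hf using hcauchy
  have hfd : ∀ n x, dist ((u n).1 x) (f x) ≤ 2 * r₀ x * θ ^ n / (1 - θ) :=
    fun n x => dist_le_of_le_geometric_of_tendsto θ (2 * r₀ x) hθ1 (fun n => hdist n x) (hf x) n
  have hθtend : Tendsto (fun n => θ ^ n) atTop (𝓝 0) :=
    tendsto_pow_atTop_nhds_zero_of_lt_one hθ0.le hθ1
  have h1θ : (0 : ℝ) < 1 - θ := by linarith
  refine ⟨f, ?_, ?_, ?_⟩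
  · rw [continuous_iff_continuousAt]
    intro x0
    set N : Set X := {x | r₀ x < r₀ x0 + 1} with hN
    have hNo : IsOpen N := isOpen_lt hr₀c continuous_const
    have hNx : x0 ∈ N := by simp only [hN, mem_setOf_eq]; linarith
    have huc : TendstoUniformlyOn (fun n x => (u n).1 x) f atTop N := by
      rw [Metric.tendstoUniformlyOn_iff]
      intro δ hδ
      have htd : Tendsto (fun n : ℕ => 2 * (r₀ x0 + 1) * θ ^ n / (1 - θ)) atTop (𝓝 0) := by
        simpa using (hθtend.const_mul (2 * (r₀ x0 + 1))).div_const (1 - θ)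
      filter_upwards [htd.eventually (gt_mem_nhds hδ)] with n hn x hx
      have hx' : r₀ x ≤ r₀ x0 + 1 := (show r₀ x < r₀ x0 + 1 from hx).le
      calc dist (f x) ((u n).1 x) = dist ((u n).1 x) (f x) := dist_comm _ _
        _ ≤ 2 * r₀ x * θ ^ n / (1 - θ) := hfd n x
        _ ≤ 2 * (r₀ x0 + 1) * θ ^ n / (1 - θ) := by gcongr
        _ < δ := hn
    have hco := huc.continuousOn
      (Filter.Frequently.of_forall fun n => ((u n).2.1).continuousOn)
    exact hco.continuousAt (hNo.mem_nhds hNx)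
  · intro x
    refine (hYc.mem_iff_infDist_zero hY).2 ?_
    have h1 : Tendsto (fun n => infDist ((u n).1 x) Y) atTop (𝓝 (infDist (f x) Y)) :=
      ((continuous_infDist_pt Y).tendsto _).comp (hf x)
    have h2 : Tendsto (fun n => θ ^ n * r₀ x) atTop (𝓝 0) := by
      simpa using hθtend.mul_const (r₀ x)
    have hle := le_of_tendsto_of_tendsto' h1 h2 (fun n => ((u n).2.2.1 x).le)
    exact le_antisymm hle infDist_nonneg
  · intro a
    have h1 : Tendsto (fun n => dist ((u n).1 ↑a) (g a)) atTop (𝓝 (dist (f ↑a) (g a))) :=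
      (hf ↑a).dist tendsto_const_nhds
    have h2 : Tendsto (fun n => θ ^ n * r₀ ↑a) atTop (𝓝 0) := by
      simpa using hθtend.mul_const (r₀ (↑a : X))
    have hle := le_of_tendsto_of_tendsto' h1 h2 (fun n => ((u n).2.2.2 a).le)
    exact dist_le_zero.1 hle
end

section
/- Let X be a topological space, let E be a normed space, let φ : X → F(E) be a lower semicontinuous set-valued mapping with nonempty closed values, let f : X → E be continuous, and let r > 0 satisfy d(f(x), φ(x)) < r for all x ∈ X. Then the set-valued mapping ψ : X → F(E) defined by ψ(x) = closure of the convex hull of φ(x) ∩ B_r(f(x)) has nonempty values, is lower semicontinuous, and, if each φ(x) is convex, has convex values. -/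
open Set Metric Filter Topology Cardinal

universe u v

lemma lsc_inter_ball_aux
    {X : Type*} [TopologicalSpace X]
    {E : Type*} [NormedAddCommGroup E] [NormedSpace ℝ E]
    {φ : X → Set E} (hφ : LowerSemicontinuousSV φ)
    {f : X → E} (hf : Continuous f) (r : ℝ) :
    LowerSemicontinuousSV (fun x => φ x ∩ Metric.ball (f x) r) := by
  intro U hU
  rw [isOpen_iff_forall_mem_open]
  rintro x₀ ⟨y, ⟨⟨hyφ, hyb⟩, hyU⟩⟩
  simp only [Metric.mem_ball] at hyb
  set δ := (r - dist y (f x₀)) / 2 with hδdef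
  have hδ : 0 < δ := by rw [hδdef]; linarith
  refine ⟨{x | (φ x ∩ (Metric.ball y δ ∩ U)).Nonempty} ∩ {x | dist y (f x) < r - δ},
    ?_, ?_, ?_⟩
  · rintro x ⟨⟨y', hy'φ, hy'b, hy'U⟩, hx⟩
    refine ⟨y', ⟨hy'φ, ?_⟩, hy'U⟩
    rw [Metric.mem_ball]
    calc dist y' (f x) ≤ dist y' y + dist y (f x) := dist_triangle _ _ _
      _ < δ + (r - δ) := by
          exact add_lt_add (by simpa [Metric.mem_ball] using hy'b) hx
      _ = r := by ring
  · exact (hφ _ ((Metric.isOpen_ball).inter hU)).inter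
      (isOpen_lt (continuous_const.dist hf) continuous_const)
  · refine ⟨⟨y, ⟨hyφ, Metric.mem_ball_self hδ, hyU⟩⟩, ?_⟩
    show dist y (f x₀) < r - δ
    linarith

lemma lsc_convexHull_aux
    {X : Type*} [TopologicalSpace X]
    {E : Type*} [NormedAddCommGroup E] [NormedSpace ℝ E]
    {S : X → Set E} (hS : LowerSemicontinuousSV S) :
    LowerSemicontinuousSV (fun x => convexHull ℝ (S x)) := by
  intro U hU
  rw [isOpen_iff_forall_mem_open]
  rintro x₀ ⟨y, hy, hyU⟩
  have hy' : y ∈ convexHull ℝ (S x₀) := hy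
  rw [convexHull_eq] at hy'
  clear hy
  rename' hy' => hy
  obtain ⟨ι, t, w, z, hw0, hw1, hzS, hcm⟩ := hy
  obtain ⟨ε, hε, hball⟩ := Metric.isOpen_iff.1 hU y hyU
  refine ⟨⋂ i ∈ t, {x | (S x ∩ Metric.ball (z i) (ε / 2)).Nonempty},
    ?_, ?_, ?_⟩
  · -- subset
    intro x hx
    simp only [Set.mem_iInter] at hx
    choose z' hz'S hz'b using hx
    classical
    set z'' : ι → E := fun i => if h : i ∈ t then z' i h else z i with hz''
    have hmem : t.centerMass w z'' ∈ convexHull ℝ (S x) := by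
      apply Finset.centerMass_mem_convexHull _ hw0 (by rw [hw1]; norm_num)
      intro i hi
      simp only [hz'', dif_pos hi]
      exact hz'S i hi
    refine ⟨t.centerMass w z'', hmem, hball ?_⟩
    rw [Metric.mem_ball, ← hcm]
    rw [Finset.centerMass_eq_of_sum_1 _ _ hw1, Finset.centerMass_eq_of_sum_1 _ _ hw1]
    rw [dist_eq_norm, ← Finset.sum_sub_distrib]
    calc ‖∑ i ∈ t, (w i • z'' i - w i • z i)‖
        ≤ ∑ i ∈ t, ‖w i • z'' i - w i • z i‖ := norm_sum_le _ _
      _ ≤ ∑ i ∈ t, w i * (ε / 2) := by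
          apply Finset.sum_le_sum
          intro i hi
          rw [← smul_sub, norm_smul, Real.norm_eq_abs, abs_of_nonneg (hw0 i hi)]
          apply mul_le_mul_of_nonneg_left _ (hw0 i hi)
          have := hz'b i hi
          simp only [hz'', dif_pos hi]
          rw [Metric.mem_ball, dist_eq_norm] at this
          exact this.le
      _ = ε / 2 := by rw [← Finset.sum_mul, hw1, one_mul]
      _ < ε := by linarith
  · exact isOpen_biInter_finset fun i _ => hS _ Metric.isOpen_ball
  · simp only [Set.mem_iInter]
    intro i hi
    exact ⟨z i, hzS i hi, Metric.mem_ball_self (by linarith)⟩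

/-- the mapping `x ↦ closure (conv (φ x ∩ B_r(f x)))` has
nonempty values, is l.s.c., and is convex-valued when `φ` is. -/
theorem lsc_of_ball_intersection
    (X : Type*) [TopologicalSpace X]
    (E : Type*) [NormedAddCommGroup E] [NormedSpace ℝ E]
    (φ : X → Set E)
    (hφval : ∀ x, (φ x).Nonempty ∧ IsClosed (φ x))
    (hφ : LowerSemicontinuousSV φ)
    (f : X → E) (hf : Continuous f)
    (r : ℝ) (hr : 0 < r)
    (hdist : ∀ x, Metric.infDist (f x) (φ x) < r) :
    (∀ x, (closure (convexHull ℝ (φ x ∩ Metric.ball (f x) r))).Nonempty) ∧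
    LowerSemicontinuousSV (fun x => closure (convexHull ℝ (φ x ∩ Metric.ball (f x) r))) ∧
    ((∀ x, Convex ℝ (φ x)) →
      ∀ x, Convex ℝ (closure (convexHull ℝ (φ x ∩ Metric.ball (f x) r)))) := by
  refine ⟨?_, ?_, ?_⟩
  · intro x
    obtain ⟨y, hyφ, hyd⟩ := (Metric.infDist_lt_iff (hφval x).1).1 (hdist x)
    refine ⟨y, subset_closure (subset_convexHull ℝ _ ⟨hyφ, ?_⟩)⟩
    rw [Metric.mem_ball, dist_comm]
    exact hyd
  · have h1 := lsc_convexHull_aux (lsc_inter_ball_aux hφ hf r)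
    intro U hU
    convert h1 U hU using 1
    ext x
    simp only [Set.mem_setOf_eq]
    constructor
    · rintro ⟨y, hyc, hyU⟩
      have : (U ∩ closure (convexHull ℝ (φ x ∩ Metric.ball (f x) r))).Nonempty := ⟨y, hyU, hyc⟩
      have h2 := this.mono (hU.inter_closure)
      rw [closure_nonempty_iff] at h2
      obtain ⟨y', hy'U, hy'c⟩ := h2
      exact ⟨y', hy'c, hy'U⟩
    · rintro ⟨y, hyc, hyU⟩
      exact ⟨y, subset_closure hyc, hyU⟩
  · intro _ x
    exact (convex_convexHull ℝ _).closure
end
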